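/- Let p and q be probability density functions on a measurable space with p(x), q(x) > 0 everywhere. The supremum over measurable functions D : X → (0,1) of the functional L(D) = ∫ p(x)·log D(x) dx + ∫ q(x)·log(1 − D(x)) dx is attained at D*(x) = p(x)/(p(x) + q(x)). -/
import Mathlib


open MeasureTheory

lemma pointwise_opt {a b d : ℝ} (ha : 0 < a) (hb : 0 < b) (hd0 : 0 < d) (hd1 : d < 1) :
    a * Real.log d + b * Real.log (1 - d) ≤
      a * Real.log (a / (a + b)) + b * Real.log (b / (a + b)) := by
  have hab : 0 < a + b := by linarith
  have h1d : 0 < 1 - d := by linarith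
  have key1 : Real.log d - Real.log (a / (a + b)) ≤ d * (a + b) / a - 1 := by
    have ht : 0 < d * (a + b) / a := by positivity
    have := Real.log_le_sub_one_of_pos ht
    have heq : Real.log (d * (a + b) / a) = Real.log d - Real.log (a / (a + b)) := by
      rw [Real.log_div (by positivity) ha.ne', Real.log_mul hd0.ne' hab.ne',
        Real.log_div ha.ne' hab.ne']
      ring
    linarith [heq ▸ this]
  have key2 : Real.log (1 - d) - Real.log (b / (a + b)) ≤ (1 - d) * (a + b) / b - 1 := by
    have ht : 0 < (1 - d) * (a + b) / b := by positivity
    have := Real.log_le_sub_one_of_pos ht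
    have heq : Real.log ((1 - d) * (a + b) / b) =
        Real.log (1 - d) - Real.log (b / (a + b)) := by
      rw [Real.log_div (by positivity) hb.ne', Real.log_mul h1d.ne' hab.ne',
        Real.log_div hb.ne' hab.ne']
      ring
    linarith [heq ▸ this]
  have k1 : a * (Real.log d - Real.log (a / (a + b))) ≤ d * (a + b) - a := by
    have := mul_le_mul_of_nonneg_left key1 ha.le
    have : a * (Real.log d - Real.log (a / (a + b))) ≤ a * (d * (a + b) / a - 1) := this
    calc a * (Real.log d - Real.log (a / (a + b))) ≤ a * (d * (a + b) / a - 1) := this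
      _ = d * (a + b) - a := by field_simp
  have k2 : b * (Real.log (1 - d) - Real.log (b / (a + b))) ≤ (1 - d) * (a + b) - b := by
    have := mul_le_mul_of_nonneg_left key2 hb.le
    calc b * (Real.log (1 - d) - Real.log (b / (a + b))) ≤ b * ((1 - d) * (a + b) / b - 1) :=
        this
      _ = (1 - d) * (a + b) - b := by field_simp
  nlinarith [k1, k2]

theorem stmt_10 {X : Type*} [MeasurableSpace X] (μ : Measure X) [SigmaFinite μ]
    (p q : X → ℝ) (hpm : Measurable p) (hqm : Measurable q)
    (hp : ∀ x, 0 < p x) (hq : ∀ x, 0 < q x)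
    (hp1 : ∫ x, p x ∂μ = 1) (hq1 : ∫ x, q x ∂μ = 1)
    (D : X → ℝ) (hDm : Measurable D)
    (hD0 : ∀ x, 0 < D x) (hD1 : ∀ x, D x < 1)
    (h1 : Integrable (fun x => p x * Real.log (D x)) μ)
    (h2 : Integrable (fun x => q x * Real.log (1 - D x)) μ)
    (h3 : Integrable (fun x => p x * Real.log (p x / (p x + q x))) μ)
    (h4 : Integrable (fun x => q x * Real.log (q x / (p x + q x))) μ) :
    (∫ x, p x * Real.log (D x) ∂μ) + (∫ x, q x * Real.log (1 - D x) ∂μ) ≤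
      (∫ x, p x * Real.log (p x / (p x + q x)) ∂μ) +
        (∫ x, q x * Real.log (q x / (p x + q x)) ∂μ) := by
  rw [← integral_add h1 h2, ← integral_add h3 h4]
  exact integral_mono (h1.add h2) (h3.add h4) fun x =>
    pointwise_opt (hp x) (hq x) (hD0 x) (hD1 x)
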